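/- Let F be a saturated fusion system over a finite p-group S with characteristic idempotent ω ∈ A(S,S)^∧_p. Write ω = ω≈ + ω≺ uniquely, where ω≈ lies in the span of basis elements [S,φ] with φ ∈ Aut_F(S), and ω≺ lies in the span of basis elements [P,φ] with P a proper subgroup of S (up to F-conjugacy). Then ω≈ = (1/|Out_F(S)|) Σ_{φ ∈ Out_F(S)} [S,φ]. -/

import Mathlib

/-- A `(G₁,G₂)`-pair: a subgroup `H ≤ G₁` with a homomorphism `ψ : H → G₂`. -/
structure GPair (G₁ G₂ : Type*) [Group G₁] [Group G₂] where
  H : Subgroup G₁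
  ψ : ↥H →* G₂

variable {G₁ G₂ G₃ : Type*} [Group G₁] [Group G₂] [Group G₃]

/-- `(G₁,G₂)`-conjugacy of pairs. -/
def gpairConj (a b : GPair G₁ G₂) : Prop :=
  ∃ (g : G₁) (h : G₂), a.H.map (MulAut.conj g).toMonoidHom = b.H ∧
    ∀ (x : G₁) (hx : x ∈ a.H) (hx' : g * x * g⁻¹ ∈ b.H),
      b.ψ ⟨g * x * g⁻¹, hx'⟩ = h * a.ψ ⟨x, hx⟩ * h⁻¹

/-- The Burnside module `A(G₁,G₂)` with coefficients in `R`: the free `R`-module on the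
conjugacy classes of `(G₁,G₂)`-pairs, an element being recorded by its coordinates. -/
def BurnsideMod (R : Type*) (G₁ G₂ : Type*) [Group G₁] [Group G₂] : Type _ :=
  Quot (gpairConj (G₁ := G₁) (G₂ := G₂)) → R

instance (R : Type*) [AddCommMonoid R] : AddCommMonoid (BurnsideMod R G₁ G₂) :=
  Pi.addCommMonoid

instance (R : Type*) [Semiring R] : Module R (BurnsideMod R G₁ G₂) :=
  Pi.module _ _ _

open Classical in
/-- The basis element of the Burnside module corresponding to a pair. -/
noncomputable def gdelta {R : Type*} [Zero R] [One R] (a : GPair G₁ G₂) :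
    BurnsideMod R G₁ G₂ :=
  fun q => if q = Quot.mk _ a then 1 else 0

/-- The subgroup `ψ⁻¹(ψ(H) ∩ K^x) ≤ G₁` appearing in the double coset formula, for
`a = (K,ρ)`, `b = (H,ψ)` and `x ∈ G₂`. -/
def dcfSub (a : GPair G₂ G₃) (b : GPair G₁ G₂) (x : G₂) : Subgroup G₁ :=
  Subgroup.map b.H.subtype
    (Subgroup.comap b.ψ (Subgroup.comap (MulAut.conj x).toMonoidHom a.H))

lemma dcfSub_le (a : GPair G₂ G₃) (b : GPair G₁ G₂) (x : G₂) : dcfSub a b x ≤ b.H :=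
  Subgroup.map_subtype_le _

lemma dcf_mem (a : GPair G₂ G₃) (b : GPair G₁ G₂) (x : G₂) (u : ↥(dcfSub a b x)) :
    ((MulAut.conj x).toMonoidHom.comp
        (b.ψ.comp (Subgroup.inclusion (dcfSub_le a b x)))) u ∈ a.H := by
  obtain ⟨w, hw, hwu⟩ := u.2
  have h1 : Subgroup.inclusion (dcfSub_le a b x) u = w := by
    apply Subtype.ext
    simpa using hwu.symm
  simp only [MonoidHom.comp_apply, h1]
  simpa [Subgroup.mem_comap] using hw

/-- The summand `[ψ⁻¹(ψ(H) ∩ K^x), ρ ∘ c_x ∘ ψ]` of the double coset formula. -/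
def dcfPair (a : GPair G₂ G₃) (b : GPair G₁ G₂) (x : G₂) : GPair G₁ G₃ where
  H := dcfSub a b x
  ψ := a.ψ.comp
    (MonoidHom.codRestrict
      ((MulAut.conj x).toMonoidHom.comp (b.ψ.comp (Subgroup.inclusion (dcfSub_le a b x))))
      a.H (dcf_mem a b x))

/-- `T` is a transversal of the double cosets `K\G₂/ψ(H)`, for `a = (K,ρ)`, `b = (H,ψ)`. -/
def IsTransversal (a : GPair G₂ G₃) (b : GPair G₁ G₂) (T : Finset G₂) : Prop :=
  ∀ y : G₂, ∃! x, x ∈ T ∧ ∃ k ∈ a.H, ∃ v ∈ b.ψ.range, y = k * x * v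

/-- The bilinear pairing `c` is the composition pairing of Burnside modules: on basis
elements it is given by the double coset formula
`[K,ρ] ∘ [H,ψ] = Σ_{x ∈ K\G₂/ψ(H)} [ψ⁻¹(ψ(H) ∩ K^x), ρ ∘ c_x ∘ ψ]`. -/
def DCFLaw {R : Type*} [CommSemiring R]
    (c : BurnsideMod R G₂ G₃ →ₗ[R] BurnsideMod R G₁ G₂ →ₗ[R] BurnsideMod R G₁ G₃) :
    Prop :=
  ∀ (a : GPair G₂ G₃) (b : GPair G₁ G₂) (T : Finset G₂), IsTransversal a b T →
    c (gdelta a) (gdelta b) = ∑ x ∈ T, gdelta (dcfPair a b x)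

/-- A fusion system `F` over a finite `p`-group `S`.  A morphism `P → Q` is recorded as a
homomorphism `↥P →* S` whose image is contained in `Q`. -/
structure FusionSystem (S : Type*) [Group S] where
  Hom : (P : Subgroup S) → Set (↥P →* S)
  inj : ∀ (P : Subgroup S) (φ : ↥P →* S), φ ∈ Hom P → Function.Injective φ
  conj_mem : ∀ (P : Subgroup S) (g : S), (MulAut.conj g).toMonoidHom.comp P.subtype ∈ Hom P
  comp_mem : ∀ (P Q : Subgroup S) (φ : ↥P →* S) (χ : ↥Q →* S), φ ∈ Hom P → χ ∈ Hom Q →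
    ∀ h : ∀ x, φ x ∈ Q, χ.comp (φ.codRestrict Q h) ∈ Hom P
  inv_mem : ∀ (P Q : Subgroup S) (e : ↥P ≃* ↥Q), Q.subtype.comp e.toMonoidHom ∈ Hom P →
    P.subtype.comp e.symm.toMonoidHom ∈ Hom Q

variable {S : Type*} [Group S]

/-- `P` and `Q` are `F`-conjugate: isomorphic in `F`. -/
def FusionSystem.FConj (F : FusionSystem S) (P Q : Subgroup S) : Prop :=
  ∃ φ ∈ F.Hom P, φ.range = Q

/-- `P` is fully centralized in `F`: `|C_S(P)| ≥ |C_S(P')|` for all `P'` that are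
`F`-conjugate to `P`. -/
def FusionSystem.FullyCentralized (F : FusionSystem S) (P : Subgroup S) : Prop :=
  ∀ Q, F.FConj P Q →
    Nat.card (Subgroup.centralizer (Q : Set S)) ≤ Nat.card (Subgroup.centralizer (P : Set S))

/-- `P` is fully normalized in `F`: `|N_S(P)| ≥ |N_S(P')|` for all `P'` that are
`F`-conjugate to `P`. -/
def FusionSystem.FullyNormalized (F : FusionSystem S) (P : Subgroup S) : Prop :=
  ∀ Q, F.FConj P Q → Nat.card (Subgroup.normalizer (Q : Set S)) ≤ Nat.card (Subgroup.normalizer (P : Set S))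

/-- Saturation of a fusion system (Definition 1.3): (I) fully normalized subgroups are
fully centralized and `Aut_S(P)` has index prime to `p` in `Aut_F(P)`; (II) every
morphism `φ` whose image is fully centralized extends to the subgroup
`N_φ = {g ∈ N_S(P) : φ ∘ c_g ∘ φ⁻¹ ∈ Aut_S(φP)}`. -/
def FusionSystem.Saturated (p : ℕ) (F : FusionSystem S) : Prop :=
  (∀ P : Subgroup S, F.FullyNormalized P → F.FullyCentralized P ∧
    ¬ p ∣ (Nat.card {φ : ↥P →* S // φ ∈ F.Hom P ∧ φ.range = P} /
      Nat.card {φ : ↥P →* S // ∃ g ∈ Subgroup.normalizer (P : Set S),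
        φ = (MulAut.conj g).toMonoidHom.comp P.subtype})) ∧
  (∀ (P : Subgroup S) (φ : ↥P →* S), φ ∈ F.Hom P → F.FullyCentralized φ.range →
    ∀ N : Subgroup S,
      (∀ g : S, g ∈ N ↔ g ∈ Subgroup.normalizer (P : Set S) ∧ ∃ h : S,
        ∀ (x : S) (hx : x ∈ P) (hx' : g * x * g⁻¹ ∈ P),
          φ ⟨g * x * g⁻¹, hx'⟩ = h * φ ⟨x, hx⟩ * h⁻¹) →
      ∃ φbar ∈ F.Hom N, ∀ (x : S) (hx : x ∈ P) (hx' : x ∈ N),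
        φbar ⟨x, hx'⟩ = φ ⟨x, hx⟩)

/-- The basis element `[P,φ]_P^S` of `A(P,S)` determined by a homomorphism
`φ : P → S`. -/
def restPair (P : Subgroup S) (φ : ↥P →* S) : GPair ↥P S :=
  ⟨⊤, φ.comp Subgroup.topEquiv.toMonoidHom⟩

section CharacteristicIdempotent

variable (p : ℕ) [Fact p.Prime] {S : Type*} [Group S]

/-- Property (a) of a characteristic idempotent: `ω ∈ A_F(S,S)^∧_p`, i.e. `ω` is
supported on basis elements `[P,φ]` with `φ ∈ Hom_F(P,S)`. -/
def PropA (F : FusionSystem S) (ω : BurnsideMod ℤ_[p] S S) : Prop :=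
  ∀ q, ω q ≠ 0 → ∃ a : GPair S S, Quot.mk _ a = q ∧ a.ψ ∈ F.Hom a.H

/-- Property (b1), right `F`-stability: `ω ∘ [P,φ]_P^S = ω ∘ [P,ι_P]_P^S` in
`A(P,S)^∧_p` for all `P ≤ S` and `φ ∈ Hom_F(P,S)`.  Here `comp1 P` is the composition
pairing `A(S,S)^∧_p × A(P,S)^∧_p → A(P,S)^∧_p`. -/
def PropB1 (F : FusionSystem S)
    (comp1 : ∀ P : Subgroup S, BurnsideMod ℤ_[p] S S →ₗ[ℤ_[p]]
      BurnsideMod ℤ_[p] ↥P S →ₗ[ℤ_[p]] BurnsideMod ℤ_[p] ↥P S)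
    (ω : BurnsideMod ℤ_[p] S S) : Prop :=
  ∀ (P : Subgroup S) (φ : ↥P →* S), φ ∈ F.Hom P →
    comp1 P ω (gdelta (restPair P φ)) = comp1 P ω (gdelta (restPair P P.subtype))

/-- Property (b2), left `F`-stability: `[φ(P),φ⁻¹]_S^P ∘ ω = [P,id]_S^P ∘ ω` in
`A(S,P)^∧_p` for all `P ≤ S` and `φ ∈ Hom_F(P,S)`, where `φinv` denotes the inverse of
`φ` on its image.  Here `comp2 P` is the composition pairing
`A(S,P)^∧_p × A(S,S)^∧_p → A(S,P)^∧_p`. -/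
def PropB2 (F : FusionSystem S)
    (comp2 : ∀ P : Subgroup S, BurnsideMod ℤ_[p] S ↥P →ₗ[ℤ_[p]]
      BurnsideMod ℤ_[p] S S →ₗ[ℤ_[p]] BurnsideMod ℤ_[p] S ↥P)
    (ω : BurnsideMod ℤ_[p] S S) : Prop :=
  ∀ (P : Subgroup S) (φ : ↥P →* S), φ ∈ F.Hom P →
    ∀ φinv : ↥φ.range →* ↥P, (∀ y : ↥φ.range, (φ (φinv y) : S) = (y : S)) →
      comp2 P (gdelta ⟨φ.range, φinv⟩) ω = comp2 P (gdelta ⟨P, MonoidHom.id ↥P⟩) ω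

/-- Property (c): `ε(ω) = 1`, where `ε` is the orbit-counting augmentation, sending the
basis element `[H,ψ]` to the index `|S : H|`; `rep` is a choice of representatives of the
conjugacy classes of pairs. -/
def PropC (rep : Quot (gpairConj (G₁ := S) (G₂ := S)) → GPair S S)
    (ω : BurnsideMod ℤ_[p] S S) : Prop :=
  ∑ᶠ q, ω q * ((rep q).H.index : ℤ_[p]) = 1

end CharacteristicIdempotent

/-!
Let `c` be the coefficient of `ω` at `[S, id]`. Composing on the right with `[S, φ]`,
`φ ∈ Aut(S)`, sends `[S, ψ]` to `[S, ψ φ]` and pairs with proper first subgroup to such pairs,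
so right `F`-stability (b1) at `P = S` shows that `ω` has the same coefficient `c` at every class
`[S, φ]` with `φ ∈ Aut_F(S)`. By (a), every other class in the support of `ω` has a proper first
subgroup; it contributes nothing to the coefficient of `ω ∘ ω` at `[S, id]`, and its index in the
`p`-group `S` is divisible by `p`. Hence idempotence gives `N c² = c` and (c) gives
`N c ≡ 1 mod p`, where `N` is the number of classes `[S, φ]`; so `c ≠ 0` and `N c = 1`.
-/

section GPair

theorem gpairConj_equivalence : Equivalence (gpairConj (G₁ := G₁) (G₂ := G₂)) where
  refl a := ⟨1, 1, by ext; simp, fun x hx _ => by simp⟩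
  symm := by
    rintro a b ⟨g, h, hmap, hψ⟩
    refine ⟨g⁻¹, h⁻¹, ?_, fun x hx hx' => ?_⟩
    · ext x
      rw [Subgroup.mem_map_equiv, ← hmap, Subgroup.mem_map_equiv]
      simp [mul_assoc]
    have hb : g * (g⁻¹ * x * g⁻¹⁻¹) * g⁻¹ ∈ b.H := by simpa [mul_assoc] using hx
    have hconj : (⟨x, hx⟩ : b.H) = ⟨_, hb⟩ := Subtype.ext (by group)
    rw [hconj, hψ _ hx' hb]
    group
  trans := by
    rintro a b c ⟨g, h, hmap, hψ⟩ ⟨g', h', hmap', hψ'⟩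
    refine ⟨g' * g, h' * h, ?_, fun x hx hx' => ?_⟩
    · rw [← hmap', ← hmap, Subgroup.map_map]
      congr 1
      ext
      simp [mul_assoc]
    have hb : g * x * g⁻¹ ∈ b.H := by rw [← hmap]; exact ⟨x, hx, rfl⟩
    have hc : g' * (g * x * g⁻¹) * g'⁻¹ ∈ c.H := by rw [← hmap']; exact ⟨_, hb, rfl⟩
    have hconj : (⟨g' * g * x * (g' * g)⁻¹, hx'⟩ : c.H) = ⟨_, hc⟩ := Subtype.ext (by group)
    rw [hconj, hψ' _ hb hc, hψ x hx hb]
    group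

lemma mk_eq_mk_iff {a b : GPair G₁ G₂} :
    Quot.mk gpairConj a = Quot.mk gpairConj b ↔ gpairConj a b := by
  rw [Quot.eq, gpairConj_equivalence.eqvGen_iff]

lemma eq_top_of_mk_eq {a b : GPair G₁ G₂} (hab : Quot.mk gpairConj a = Quot.mk gpairConj b)
    (ha : a.H = ⊤) : b.H = ⊤ := by
  obtain ⟨g, -, hmap, -⟩ := mk_eq_mk_iff.mp hab
  rw [← hmap, ha, Subgroup.map_top_of_surjective _ (MulAut.conj g).surjective]

def topPair (f : G₁ →* G₂) : GPair G₁ G₂ := ⟨⊤, f.comp (⊤ : Subgroup G₁).subtype⟩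

lemma exists_eq_topPair {a : GPair G₁ G₂} (ha : a.H = ⊤) : ∃ f, a = topPair f := by
  obtain ⟨H, ψ⟩ := a
  subst ha
  exact ⟨ψ.comp Subgroup.topEquiv.symm.toMonoidHom, rfl⟩

lemma topPair_ψ_surjective {f : G₁ →* G₂} (hf : Function.Surjective f) :
    Function.Surjective (topPair f).ψ := fun y =>
  let ⟨x, hx⟩ := hf y
  ⟨⟨x, trivial⟩, hx⟩

lemma mk_topPair_eq_iff {f f' : G₁ →* G₂} :
    Quot.mk gpairConj (topPair f) = Quot.mk gpairConj (topPair f') ↔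
      ∃ g h, ∀ x, f' (g * x * g⁻¹) = h * f x * h⁻¹ := by
  rw [mk_eq_mk_iff]
  constructor
  · rintro ⟨g, h, -, hψ⟩
    exact ⟨g, h, fun x => hψ x trivial trivial⟩
  · rintro ⟨g, h, hψ⟩
    exact ⟨g, h, Subgroup.map_top_of_surjective _ (MulAut.conj g).surjective, fun x _ _ => hψ x⟩

lemma mk_topPair_comp_eq_iff {G : Type*} [Group G] {u : G →* G₁}
    (hu : Function.Surjective u) {f f' : G₁ →* G₂} :
    Quot.mk gpairConj (topPair (f.comp u)) = Quot.mk gpairConj (topPair (f'.comp u)) ↔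
      Quot.mk gpairConj (topPair f) = Quot.mk gpairConj (topPair f') := by
  simp only [mk_topPair_eq_iff, MonoidHom.comp_apply]
  constructor
  · rintro ⟨g, h, hψ⟩
    refine ⟨u g, h, fun y => ?_⟩
    obtain ⟨x, rfl⟩ := hu y
    simpa using hψ x
  · rintro ⟨g, h, hψ⟩
    obtain ⟨g, rfl⟩ := hu g
    exact ⟨g, h, fun x => by simpa using hψ (u x)⟩

end GPair

section DoubleCosetFormula

lemma isTransversal_singleton_one {a : GPair G₂ G₃} {b : GPair G₁ G₂}
    (hb : Function.Surjective b.ψ) : IsTransversal a b {1} := fun y =>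
  ⟨1, ⟨Finset.mem_singleton_self 1, 1, one_mem _, y, hb y, by simp⟩,
    fun _ hx => Finset.mem_singleton.mp hx.1⟩

lemma exists_isTransversal [Finite G₂] (a : GPair G₂ G₃) (b : GPair G₁ G₂) :
    ∃ T, IsTransversal a b T := by
  classical
  let D := DoubleCoset.Quotient (a.H : Set G₂) b.ψ.range
  have : Fintype D := @Fintype.ofFinite D (Finite.of_surjective _ Quotient.mk_surjective)
  refine ⟨Finset.univ.image fun q : D => Quotient.out q, fun y =>
    ⟨Quotient.out (DoubleCoset.mk a.H b.ψ.range y),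
      ⟨Finset.mem_image_of_mem _ (Finset.mem_univ _), ?_⟩, ?_⟩⟩
  · obtain ⟨h, k, hh, hk, he⟩ := DoubleCoset.mk_out_eq_mul a.H b.ψ.range y
    exact ⟨h⁻¹, inv_mem hh, k⁻¹, inv_mem hk, by rw [he]; group⟩
  · rintro x ⟨hx, k, hk, v, hv, rfl⟩
    obtain ⟨q, -, rfl⟩ := Finset.mem_image.mp hx
    rw [← (DoubleCoset.eq _ _ _ _).mpr ⟨k, hk, v, hv, rfl⟩]
    exact (congrArg Quotient.out (DoubleCoset.out_eq' _ _ q)).symm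

lemma dcfSub_ne_top_of_ne_top_right {a : GPair G₂ G₃} {b : GPair G₁ G₂} (hb : b.H ≠ ⊤)
    (x : G₂) : dcfSub a b x ≠ ⊤ :=
  fun h => hb (top_le_iff.mp (h ▸ dcfSub_le a b x))

lemma dcfSub_ne_top_of_ne_top_left {a : GPair G₂ G₃} {b : GPair G₁ G₂}
    (hb : Function.Surjective b.ψ) (ha : a.H ≠ ⊤) (x : G₂) : dcfSub a b x ≠ ⊤ := by
  refine fun h => ha (eq_top_iff.mpr fun z _ => ?_)
  obtain ⟨w, hw⟩ := hb (x⁻¹ * z * x)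
  obtain ⟨w', hw', hww'⟩ : (w : G₁) ∈ dcfSub a b x := h ▸ trivial
  simp only [SetLike.mem_coe, Subgroup.mem_comap, Subtype.ext hww', hw] at hw'
  simpa [mul_assoc] using hw'

lemma mk_dcfPair_topPair (v : G₂ →* G₃) (f : G₁ →* G₂) :
    Quot.mk gpairConj (dcfPair (topPair v) (topPair f) 1) =
      Quot.mk gpairConj (topPair (v.comp f)) := by
  have hsub : dcfSub (topPair v) (topPair f) 1 = ⊤ :=
    eq_top_iff.mpr fun x _ => ⟨⟨x, trivial⟩, trivial, rfl⟩
  refine Quot.sound ⟨1, 1, ?_, fun x _ _ => ?_⟩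
  · change Subgroup.map _ (dcfSub _ _ 1) = ⊤
    rw [hsub, Subgroup.map_top_of_surjective _ (MulAut.conj 1).surjective]
  · change v (f (1 * x * 1⁻¹)) = 1 * v (1 * f x * 1⁻¹) * 1⁻¹
    simp

end DoubleCosetFormula

section BurnsideMod

variable {H₁ H₂ : Type*} [Group H₁] [Group H₂] {R : Type*}

instance GPair.finite [Finite G₁] [Finite G₂] : Finite (GPair G₁ G₂) :=
  have : ∀ H : Subgroup G₁, Finite (H →* G₂) := fun _ => DFunLike.finite _
  Finite.of_injective (fun a : GPair G₁ G₂ => (⟨a.H, a.ψ⟩ : (H : Subgroup G₁) × (H →* G₂)))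
    (by rintro ⟨H, ψ⟩ ⟨H', ψ'⟩ h; cases h; rfl)

noncomputable instance [Finite G₁] [Finite G₂] :
    Fintype (Quot (gpairConj (G₁ := G₁) (G₂ := G₂))) :=
  @Fintype.ofFinite _ (Finite.of_surjective _ Quot.exists_rep)

lemma BurnsideMod.sum_apply [AddCommMonoid R] {ι : Type*} (s : Finset ι)
    (f : ι → BurnsideMod R G₁ G₂) (t : Quot (gpairConj (G₁ := G₁) (G₂ := G₂))) :
    (∑ i ∈ s, f i) t = ∑ i ∈ s, f i t :=
  Finset.sum_apply (M := fun _ => R) t s f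

lemma BurnsideMod.smul_apply [Semiring R] (r : R) (ω : BurnsideMod R G₁ G₂)
    (t : Quot (gpairConj (G₁ := G₁) (G₂ := G₂))) : (r • ω) t = r * ω t :=
  rfl

lemma BurnsideMod.eq_sum_smul_gdelta [Semiring R]
    [Fintype (Quot (gpairConj (G₁ := G₁) (G₂ := G₂)))] (ω : BurnsideMod R G₁ G₂) :
    ω = ∑ q, ω q • gdelta q.out := by
  classical
  funext t
  simp only [BurnsideMod.sum_apply, BurnsideMod.smul_apply, gdelta, Quot.out_eq, mul_ite,
    mul_one, mul_zero]
  convert (Fintype.sum_ite_eq t ω).symm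

lemma BurnsideMod.linearMap_apply [CommSemiring R]
    [Fintype (Quot (gpairConj (G₁ := G₁) (G₂ := G₂)))]
    (L : BurnsideMod R G₁ G₂ →ₗ[R] BurnsideMod R H₁ H₂) (ω : BurnsideMod R G₁ G₂)
    (t : Quot (gpairConj (G₁ := H₁) (G₂ := H₂))) :
    L ω t = ∑ q, ω q * L (gdelta q.out) t := by
  conv_lhs => rw [BurnsideMod.eq_sum_smul_gdelta ω, map_sum]
  simp only [map_smul, BurnsideMod.sum_apply, BurnsideMod.smul_apply]

lemma gdelta_eq_of_mk_eq [Zero R] [One R] {a b : GPair G₁ G₂}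
    (hab : Quot.mk gpairConj a = Quot.mk gpairConj b) :
    (gdelta a : BurnsideMod R G₁ G₂) = gdelta b := by
  unfold gdelta; rw [hab]

lemma gdelta_apply_congr [Zero R] [One R] {a : GPair G₁ G₂} {b : GPair H₁ H₂}
    {t : Quot (gpairConj (G₁ := G₁) (G₂ := G₂))} {t' : Quot (gpairConj (G₁ := H₁) (G₂ := H₂))}
    (h : t = Quot.mk gpairConj a ↔ t' = Quot.mk gpairConj b) :
    (gdelta a : BurnsideMod R G₁ G₂) t = gdelta b t' := by
  classical
  exact if_congr h rfl rfl

lemma BurnsideMod.sum_mul_gdelta [Semiring R]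
    [Fintype (Quot (gpairConj (G₁ := G₁) (G₂ := G₂)))]
    (ω : BurnsideMod R G₁ G₂) (a : GPair G₁ G₂) :
    ∑ q, ω q * gdelta a q = ω (Quot.mk gpairConj a) := by
  classical
  simp only [gdelta, mul_ite, mul_one, mul_zero]
  convert Fintype.sum_ite_eq' _ ω

end BurnsideMod

namespace DCFLaw

variable {R : Type*} [CommSemiring R]

lemma gdelta_topPair
    {c : BurnsideMod R G₂ G₃ →ₗ[R] BurnsideMod R G₁ G₂ →ₗ[R] BurnsideMod R G₁ G₃}
    (hc : DCFLaw c) (v : G₂ →* G₃) {f : G₁ →* G₂} (hf : Function.Surjective f) :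
    c (gdelta (topPair v)) (gdelta (topPair f)) = gdelta (topPair (v.comp f)) := by
  rw [hc _ _ {1} (isTransversal_singleton_one (topPair_ψ_surjective hf)), Finset.sum_singleton,
    gdelta_eq_of_mk_eq (mk_dcfPair_topPair v f)]

lemma apply_gdelta_eq_zero [Finite G₂]
    {c : BurnsideMod R G₂ G₃ →ₗ[R] BurnsideMod R G₁ G₂ →ₗ[R] BurnsideMod R G₁ G₃}
    (hc : DCFLaw c) {a : GPair G₂ G₃} {b : GPair G₁ G₂} (hab : ∀ x, dcfSub a b x ≠ ⊤)
    {e : GPair G₁ G₃} (he : e.H = ⊤) : c (gdelta a) (gdelta b) (Quot.mk gpairConj e) = 0 := by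
  obtain ⟨T, hT⟩ := exists_isTransversal a b
  rw [hc a b T hT, BurnsideMod.sum_apply]
  exact Finset.sum_eq_zero fun x _ => if_neg fun h => hab x (eq_top_of_mk_eq h he)

lemma apply_eq_zero_of_ne_top [Finite G₂] [Finite G₃]
    {c : BurnsideMod R G₂ G₃ →ₗ[R] BurnsideMod R G₁ G₂ →ₗ[R] BurnsideMod R G₁ G₃}
    (hc : DCFLaw c) (X : BurnsideMod R G₂ G₃) {b : GPair G₁ G₂} (hb : b.H ≠ ⊤)
    {e : GPair G₁ G₃} (he : e.H = ⊤) : c X (gdelta b) (Quot.mk gpairConj e) = 0 := by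
  rw [← LinearMap.flip_apply, BurnsideMod.linearMap_apply]
  exact Finset.sum_eq_zero fun q _ => by
    rw [LinearMap.flip_apply, hc.apply_gdelta_eq_zero (dcfSub_ne_top_of_ne_top_right hb) he,
      mul_zero]

variable [Finite S] {G : Type*} [Group G]
    {c : BurnsideMod R S S →ₗ[R] BurnsideMod R G S →ₗ[R] BurnsideMod R G S}

lemma apply_gdelta_topPair_comp (hc : DCFLaw c) (b : GPair S S) (e : MulAut S) (a : S →* S)
    {u : G →* S} (hu : Function.Surjective u) :
    c (gdelta b) (gdelta (topPair (e.toMonoidHom.comp u)))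
        (Quot.mk gpairConj (topPair (a.comp u))) =
      gdelta (topPair (a.comp e.symm.toMonoidHom)) (Quot.mk gpairConj b) := by
  have heu : Function.Surjective (e.toMonoidHom.comp u) := e.surjective.comp hu
  by_cases hb : b.H = ⊤
  · obtain ⟨f, rfl⟩ := exists_eq_topPair hb
    rw [hc.gdelta_topPair f heu]
    refine gdelta_apply_congr ?_
    have ha : a = (a.comp e.symm.toMonoidHom).comp e.toMonoidHom := by ext; simp
    rw [← MonoidHom.comp_assoc, mk_topPair_comp_eq_iff hu, ha, mk_topPair_comp_eq_iff e.surjective,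
      ← ha, eq_comm]
  · rw [hc.apply_gdelta_eq_zero (dcfSub_ne_top_of_ne_top_left (topPair_ψ_surjective heu) hb) rfl]
    exact (if_neg fun h => hb (eq_top_of_mk_eq h.symm rfl)).symm

theorem apply_topPair_comp (hc : DCFLaw c) (ω : BurnsideMod R S S) (e : MulAut S) (a : S →* S)
    {u : G →* S} (hu : Function.Surjective u) :
    c ω (gdelta (topPair (e.toMonoidHom.comp u))) (Quot.mk gpairConj (topPair (a.comp u))) =
      ω (Quot.mk gpairConj (topPair (a.comp e.symm.toMonoidHom))) := by
  rw [← LinearMap.flip_apply, BurnsideMod.linearMap_apply]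
  simp only [LinearMap.flip_apply, hc.apply_gdelta_topPair_comp _ e a hu, Quot.out_eq,
    BurnsideMod.sum_mul_gdelta]

end DCFLaw

lemma Finset.sum_mul_ite_eq_card_mul {ι R : Type*} [Fintype ι] [CommSemiring R] (P : ι → Prop)
    [DecidablePred P] {f : ι → R} {c : R} (hf : ∀ i, P i → f i = c) (x : R) :
    ∑ i, f i * (if P i then x else 0) = Nat.card {i // P i} * c * x := by
  calc ∑ i, f i * (if P i then x else 0) = ∑ i, if P i then c * x else 0 :=
        Finset.sum_congr rfl fun i _ => by split_ifs with h <;> simp [hf i, h]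
    _ = Nat.card {i // P i} * c * x := by
        rw [Finset.sum_ite, Finset.sum_const, Finset.sum_const_zero, add_zero, nsmul_eq_mul,
          Nat.card_eq_fintype_card, Fintype.card_subtype, mul_assoc]

lemma IsPGroup.dvd_index_of_ne_top {p : ℕ} [Fact p.Prime] {G : Type*} [Group G] [Finite G]
    (hG : IsPGroup p G) {H : Subgroup G} (hH : H ≠ ⊤) : p ∣ H.index := by
  obtain ⟨n, hn⟩ := hG.index H
  rcases n with _ | n
  · exact absurd (Subgroup.index_eq_one.mp (by simpa using hn)) hH
  · rw [hn]
    exact dvd_pow_self p n.succ_ne_zero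

namespace FusionSystem

variable (F : FusionSystem S)

lemma exists_mulAut_of_mem_hom_top [Finite S] {f : S →* S}
    (hf : f.comp (⊤ : Subgroup S).subtype ∈ F.Hom ⊤) : ∃ e : MulAut S, e.toMonoidHom = f := by
  have hinj : Function.Injective f := fun x y hxy =>
    congrArg Subtype.val (F.inj ⊤ _ hf (a₁ := ⟨x, trivial⟩) (a₂ := ⟨y, trivial⟩) hxy)
  exact ⟨MulEquiv.ofBijective f (Finite.injective_iff_bijective.mp hinj), rfl⟩

lemma symm_mem_hom_top {e : MulAut S}
    (he : e.toMonoidHom.comp (⊤ : Subgroup S).subtype ∈ F.Hom ⊤) :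
    e.symm.toMonoidHom.comp (⊤ : Subgroup S).subtype ∈ F.Hom ⊤ :=
  F.inv_mem ⊤ ⊤ ((Subgroup.topEquiv.trans e).trans Subgroup.topEquiv.symm) he

def IsAutClass (q : Quot (gpairConj (G₁ := S) (G₂ := S))) : Prop :=
  ∃ b : GPair S S, Quot.mk gpairConj b = q ∧ b.H = ⊤ ∧ b.ψ ∈ F.Hom b.H

variable {F}

lemma isAutClass_mk_iff {b : GPair S S} (hb : b.ψ ∈ F.Hom b.H) :
    F.IsAutClass (Quot.mk gpairConj b) ↔ b.H = ⊤ :=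
  ⟨fun ⟨_, hb', htop, _⟩ => eq_top_of_mk_eq hb' htop, fun h => ⟨b, rfl, h, hb⟩⟩

end FusionSystem

section Coefficients

variable {p : ℕ} [Fact p.Prime] [Finite S] {F : FusionSystem S} {ω : BurnsideMod ℤ_[p] S S}

theorem PropB1.coeff_eq_of_isAutClass
    {comp1 : ∀ P : Subgroup S, BurnsideMod ℤ_[p] S S →ₗ[ℤ_[p]]
      BurnsideMod ℤ_[p] ↥P S →ₗ[ℤ_[p]] BurnsideMod ℤ_[p] ↥P S}
    (hB1 : PropB1 p F comp1 ω) (h1 : DCFLaw (comp1 ⊤))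
    {q : Quot (gpairConj (G₁ := S) (G₂ := S))} (hq : F.IsAutClass q) :
    ω q = ω (Quot.mk gpairConj (topPair (MonoidHom.id S))) := by
  obtain ⟨b, rfl, hb, hbF⟩ := hq
  obtain ⟨f, rfl⟩ := exists_eq_topPair hb
  obtain ⟨e, rfl⟩ := F.exists_mulAut_of_mem_hom_top hbF
  have hι : Function.Surjective (⊤ : Subgroup S).subtype := fun x => ⟨⟨x, trivial⟩, rfl⟩
  let t := Quot.mk gpairConj (topPair (e.toMonoidHom.comp (⊤ : Subgroup S).subtype))
  -- `restPair ⊤ φ` is `topPair φ`, and composing with `(1 : MulAut S)` is the identity, by `rfl`.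
  calc ω (Quot.mk gpairConj (topPair e.toMonoidHom))
      = comp1 ⊤ ω (gdelta (restPair ⊤ (⊤ : Subgroup S).subtype)) t :=
        (h1.apply_topPair_comp ω 1 e.toMonoidHom hι).symm
    _ = comp1 ⊤ ω (gdelta (restPair ⊤ (e.toMonoidHom.comp (⊤ : Subgroup S).subtype))) t :=
        (congrFun (hB1 ⊤ _ hbF) t).symm
    _ = ω (Quot.mk gpairConj (topPair (e.toMonoidHom.comp e.symm.toMonoidHom))) :=
        h1.apply_topPair_comp ω e e.toMonoidHom hι
    _ = ω (Quot.mk gpairConj (topPair (MonoidHom.id S))) := by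
        congr
        ext
        simp

theorem PropA.comp_self_apply_topPair_id
    {compSS : BurnsideMod ℤ_[p] S S →ₗ[ℤ_[p]] BurnsideMod ℤ_[p] S S →ₗ[ℤ_[p]]
      BurnsideMod ℤ_[p] S S}
    (hA : PropA p F ω) (hSS : DCFLaw compSS) {c : ℤ_[p]}
    (huni : ∀ q, F.IsAutClass q → ω q = c) :
    compSS ω ω (Quot.mk gpairConj (topPair (MonoidHom.id S))) =
      Nat.card {q // F.IsAutClass q} * c * c := by
  classical
  rw [BurnsideMod.linearMap_apply (compSS ω), ← Finset.sum_mul_ite_eq_card_mul _ huni]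
  refine Finset.sum_congr rfl fun q _ => ?_
  by_cases hq : ω q = 0
  · simp [hq]
  obtain ⟨b, hbq, hbF⟩ := hA q hq
  have hiff : F.IsAutClass q ↔ b.H = ⊤ := hbq ▸ FusionSystem.isAutClass_mk_iff hbF
  rw [gdelta_eq_of_mk_eq ((Quot.out_eq q).trans hbq.symm)]
  congr 1
  split_ifs with hq'
  · obtain ⟨f, rfl⟩ := exists_eq_topPair (hiff.mp hq')
    obtain ⟨e, rfl⟩ := F.exists_mulAut_of_mem_hom_top hbF
    have := hSS.apply_topPair_comp ω e (MonoidHom.id S) (u := MonoidHom.id S)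
      Function.surjective_id
    simp only [MonoidHom.comp_id, MonoidHom.id_comp] at this
    rw [this]
    exact huni _ ⟨_, rfl, rfl, F.symm_mem_hom_top hbF⟩
  · exact hSS.apply_eq_zero_of_ne_top ω (mt hiff.mpr hq') rfl

theorem PropC.p_dvd_one_sub_card_mul (hS : IsPGroup p S) (hA : PropA p F ω)
    {rep : Quot (gpairConj (G₁ := S) (G₂ := S)) → GPair S S}
    (hrep : ∀ q, Quot.mk gpairConj (rep q) = q) (hC : PropC p rep ω) {c : ℤ_[p]}
    (huni : ∀ q, F.IsAutClass q → ω q = c) :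
    (p : ℤ_[p]) ∣ 1 - Nat.card {q // F.IsAutClass q} * c := by
  classical
  rw [← hC, finsum_eq_sum_of_fintype, ← mul_one (_ * c),
    ← Finset.sum_mul_ite_eq_card_mul _ huni, ← Finset.sum_sub_distrib]
  refine Finset.dvd_sum fun q _ => ?_
  rw [← mul_sub]
  by_cases hq : ω q = 0
  · simp [hq]
  refine Dvd.dvd.mul_left ?_ _
  obtain ⟨b, hbq, hbF⟩ := hA q hq
  have hrepq : Quot.mk gpairConj (rep q) = Quot.mk gpairConj b := (hrep q).trans hbq.symm
  have hiff : F.IsAutClass q ↔ b.H = ⊤ := hbq ▸ FusionSystem.isAutClass_mk_iff hbF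
  split_ifs with hq'
  · rw [eq_top_of_mk_eq hrepq.symm (hiff.mp hq'), Subgroup.index_top, Nat.cast_one, sub_self]
    exact dvd_zero _
  · rw [sub_zero]
    exact Nat.cast_dvd_cast <|
      hS.dvd_index_of_ne_top fun h => hq' (hiff.mpr (eq_top_of_mk_eq hrepq h))

end Coefficients

theorem stmt17_general (p : ℕ) [Fact p.Prime] {S : Type*} [Group S] [Fintype S]
    (hS : IsPGroup p S) (F : FusionSystem S)
    (compSS : BurnsideMod ℤ_[p] S S →ₗ[ℤ_[p]] BurnsideMod ℤ_[p] S S →ₗ[ℤ_[p]]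
      BurnsideMod ℤ_[p] S S)
    (hSS : DCFLaw compSS)
    (comp1 : ∀ P : Subgroup S, BurnsideMod ℤ_[p] S S →ₗ[ℤ_[p]]
      BurnsideMod ℤ_[p] ↥P S →ₗ[ℤ_[p]] BurnsideMod ℤ_[p] ↥P S)
    (h1 : ∀ P, DCFLaw (comp1 P))
    (rep : Quot (gpairConj (G₁ := S) (G₂ := S)) → GPair S S)
    (hrep : ∀ q, Quot.mk _ (rep q) = q)
    (ω : BurnsideMod ℤ_[p] S S)
    (hidem : compSS ω ω = ω)
    (hA : PropA p F ω) (hB1 : PropB1 p F comp1 ω)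
    (hC : PropC p rep ω) :
    ∀ a : GPair S S, a.H = ⊤ → a.ψ ∈ F.Hom a.H →
      (Nat.card {q : Quot (gpairConj (G₁ := S) (G₂ := S)) //
          ∃ b : GPair S S, Quot.mk _ b = q ∧ b.H = ⊤ ∧ b.ψ ∈ F.Hom b.H} : ℤ_[p]) *
        ω (Quot.mk _ a) = 1 := by
  intro a ha haF
  set c := ω (Quot.mk gpairConj (topPair (MonoidHom.id S)))
  have huni : ∀ q, F.IsAutClass q → ω q = c := fun q => hB1.coeff_eq_of_isAutClass (h1 ⊤)
  have hfix : (Nat.card {q // F.IsAutClass q} : ℤ_[p]) * c * c = c :=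
    (hA.comp_self_apply_topPair_id hSS huni).symm.trans (congrFun hidem _)
  have hdvd := hC.p_dvd_one_sub_card_mul hS hA hrep huni
  have hc : c ≠ 0 := fun h0 => PadicInt.p_nonunit (isUnit_of_dvd_one (by simpa [h0] using hdvd))
  change (Nat.card {q // F.IsAutClass q} : ℤ_[p]) * _ = 1
  rw [huni _ ⟨a, rfl, ha, haF⟩]
  exact mul_right_cancel₀ hc (by rw [hfix, one_mul])

/-- Let `F` be a saturated fusion system over a finite `p`-group `S` with characteristic
idempotent `ω ∈ A(S,S)^∧_p` (an idempotent satisfying properties (a), (b1), (b2), (c)).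
Writing `ω = ω≈ + ω≺` with `ω≈` supported on the classes `[S,φ]`, `φ ∈ Aut_F(S)`, and
`ω≺` supported on classes of pairs with proper first subgroup, we have
`ω≈ = (1/|Out_F(S)|) Σ_{φ ∈ Out_F(S)} [S,φ]`: equivalently, the coefficient of `ω` at
every class `[S,φ]` with `φ ∈ Aut_F(S)` equals the inverse of the number `N` of such
classes (and `N = |Out_F(S)|`). -/
theorem stmt17 (p : ℕ) [Fact p.Prime] {S : Type*} [Group S] [Fintype S]
    (hS : IsPGroup p S) (F : FusionSystem S) (hsat : F.Saturated p)
    (compSS : BurnsideMod ℤ_[p] S S →ₗ[ℤ_[p]] BurnsideMod ℤ_[p] S S →ₗ[ℤ_[p]]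
      BurnsideMod ℤ_[p] S S)
    (hSS : DCFLaw compSS)
    (comp1 : ∀ P : Subgroup S, BurnsideMod ℤ_[p] S S →ₗ[ℤ_[p]]
      BurnsideMod ℤ_[p] ↥P S →ₗ[ℤ_[p]] BurnsideMod ℤ_[p] ↥P S)
    (h1 : ∀ P, DCFLaw (comp1 P))
    (comp2 : ∀ P : Subgroup S, BurnsideMod ℤ_[p] S ↥P →ₗ[ℤ_[p]]
      BurnsideMod ℤ_[p] S S →ₗ[ℤ_[p]] BurnsideMod ℤ_[p] S ↥P)
    (h2 : ∀ P, DCFLaw (comp2 P))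
    (rep : Quot (gpairConj (G₁ := S) (G₂ := S)) → GPair S S)
    (hrep : ∀ q, Quot.mk _ (rep q) = q)
    (ω : BurnsideMod ℤ_[p] S S)
    (hidem : compSS ω ω = ω)
    (hA : PropA p F ω) (hB1 : PropB1 p F comp1 ω) (hB2 : PropB2 p F comp2 ω)
    (hC : PropC p rep ω) :
    ∀ a : GPair S S, a.H = ⊤ → a.ψ ∈ F.Hom a.H →
      (Nat.card {q : Quot (gpairConj (G₁ := S) (G₂ := S)) //
          ∃ b : GPair S S, Quot.mk _ b = q ∧ b.H = ⊤ ∧ b.ψ ∈ F.Hom b.H} : ℤ_[p]) *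
        ω (Quot.mk _ a) = 1 :=
  stmt17_general p hS F compSS hSS comp1 h1 rep hrep ω hidem hA hB1 hC
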